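/- arXiv:0903.3287 — 3 statements merged into one kernel-verified Lean document; each statement's English description precedes it below -/
import Mathlib

section
/- Let p, q be points in the open unit ball of R^d. Define for a point x the power distance to the ball with center c_i = p_i / (2·sqrt(1-‖p_i‖²)) and squared radius r_i² = ‖p_i‖²/(4(1-‖p_i‖²)) - 1/sqrt(1-‖p_i‖²) (where p_1 = p, p_2 = q). Then the radical hyperplane {x : ‖x-c_1‖² - r_1² = ‖x-c_2‖² - r_2²} coincides with the Klein bisector hyperplane {x : ⟨x, sqrt(1-‖p‖²)·q - sqrt(1-‖q‖²)·p⟩ + sqrt(1-‖q‖²) - sqrt(1-‖p‖²) = 0}, up to a nonzero scalar multiple of the defining linear equation. -/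
/-!
Expanding the square, the power distance of `x` to the ball centred at `t • p` with squared
radius `t² ‖p‖² - 2t` is `‖x‖² + 2t (1 - ⟪x, p⟫)`. For `t = 1 / (2 √(1 - ‖p‖²))` the radius in the
statement has exactly this form, so each power distance is `‖x‖² + (1 - ⟪x, p⟫) / √(1 - ‖p‖²)`.
In the difference the `‖x‖²` cancel, and clearing the denominators `√(1 - ‖p‖²) √(1 - ‖q‖²)`
leaves the affine form of the Klein bisector.
-/

open scoped RealInnerProductSpace

section PowerDistance

variable {E : Type*} [NormedAddCommGroup E] [InnerProductSpace ℝ E]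

theorem norm_sub_smul_sq_sub_eq (x p : E) (t : ℝ) :
    ‖x - t • p‖ ^ 2 - (t ^ 2 * ‖p‖ ^ 2 - 2 * t) = ‖x‖ ^ 2 + 2 * t * (1 - ⟪x, p⟫) := by
  rw [norm_sub_sq_real, norm_smul, real_inner_smul_right, mul_pow, Real.norm_eq_abs, sq_abs]
  ring

theorem klein_power_distance_eq {p : E} (hp : ‖p‖ < 1) (x : E) :
    ‖x - (2 * √(1 - ‖p‖ ^ 2))⁻¹ • p‖ ^ 2 - (‖p‖ ^ 2 / (4 * (1 - ‖p‖ ^ 2)) - 1 / √(1 - ‖p‖ ^ 2)) =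
      ‖x‖ ^ 2 + (1 - ⟪x, p⟫) / √(1 - ‖p‖ ^ 2) := by
  have hpos : 0 < 1 - ‖p‖ ^ 2 := by nlinarith [norm_nonneg p]
  have hs : 0 < √(1 - ‖p‖ ^ 2) := Real.sqrt_pos.mpr hpos
  have hradius : ‖p‖ ^ 2 / (4 * (1 - ‖p‖ ^ 2)) - 1 / √(1 - ‖p‖ ^ 2) =
      ((2 * √(1 - ‖p‖ ^ 2))⁻¹) ^ 2 * ‖p‖ ^ 2 - 2 * (2 * √(1 - ‖p‖ ^ 2))⁻¹ := by
    have hs2 : √(1 - ‖p‖ ^ 2) ^ 2 = 1 - ‖p‖ ^ 2 := Real.sq_sqrt hpos.le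
    field_simp
    linear_combination 4 * ‖p‖ ^ 2 * hs2
  rw [hradius, norm_sub_smul_sq_sub_eq]
  field_simp

end PowerDistance

theorem klein_bisector_eq_radical_hyperplane {d : ℕ} (p q : EuclideanSpace ℝ (Fin d))
    (hp : ‖p‖ < 1) (hq : ‖q‖ < 1) :
    ∃ lam : ℝ, lam ≠ 0 ∧ ∀ x : EuclideanSpace ℝ (Fin d),
      (‖x - (2 * Real.sqrt (1 - ‖p‖ ^ 2))⁻¹ • p‖ ^ 2 -
          (‖p‖ ^ 2 / (4 * (1 - ‖p‖ ^ 2)) - 1 / Real.sqrt (1 - ‖p‖ ^ 2))) -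
      (‖x - (2 * Real.sqrt (1 - ‖q‖ ^ 2))⁻¹ • q‖ ^ 2 -
          (‖q‖ ^ 2 / (4 * (1 - ‖q‖ ^ 2)) - 1 / Real.sqrt (1 - ‖q‖ ^ 2))) =
      lam * (⟪x, Real.sqrt (1 - ‖p‖ ^ 2) • q - Real.sqrt (1 - ‖q‖ ^ 2) • p⟫ +
        Real.sqrt (1 - ‖q‖ ^ 2) - Real.sqrt (1 - ‖p‖ ^ 2)) := by
  have hsp : 0 < √(1 - ‖p‖ ^ 2) := Real.sqrt_pos.mpr (by nlinarith [norm_nonneg p])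
  have hsq : 0 < √(1 - ‖q‖ ^ 2) := Real.sqrt_pos.mpr (by nlinarith [norm_nonneg q])
  refine ⟨(√(1 - ‖p‖ ^ 2) * √(1 - ‖q‖ ^ 2))⁻¹, by positivity, fun x => ?_⟩
  rw [klein_power_distance_eq hp, klein_power_distance_eq hq, inner_sub_right,
    real_inner_smul_right, real_inner_smul_right]
  field_simp
  ring
end

section
/- For points p, q in the open unit ball, the Klein distance of their images k(p) = 2p/(1+‖p‖²), k(q) = 2q/(1+‖q‖²) equals the Poincaré distance of p and q: arccosh((1-⟨k(p),k(q)⟩)/sqrt((1-‖k(p)‖²)(1-‖k(q)‖²))) = arccosh(1 + 2‖p-q‖²/((1-‖p‖²)(1-‖q‖²))). -/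
open scoped RealInnerProductSpace

noncomputable def arcosh (x : ℝ) : ℝ := Real.log (x + Real.sqrt (x ^ 2 - 1))

noncomputable def hK {d : ℕ} (p q : EuclideanSpace ℝ (Fin d)) : ℝ :=
  arcosh ((1 - ⟪p, q⟫) / Real.sqrt ((1 - ‖p‖ ^ 2) * (1 - ‖q‖ ^ 2)))

noncomputable def toKlein {d : ℕ} (p : EuclideanSpace ℝ (Fin d)) : EuclideanSpace ℝ (Fin d) :=
  (2 / (1 + ‖p‖ ^ 2)) • p

theorem klein_dist_of_images_eq_poincare_dist {d : ℕ}
    (p q : EuclideanSpace ℝ (Fin d)) (hp : ‖p‖ < 1) (hq : ‖q‖ < 1) :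
    hK (toKlein p) (toKlein q) =
      arcosh (1 + 2 * ‖p - q‖ ^ 2 / ((1 - ‖p‖ ^ 2) * (1 - ‖q‖ ^ 2))) := by
  have hp2 : ‖p‖ ^ 2 < 1 := by nlinarith [norm_nonneg p]
  have hq2 : ‖q‖ ^ 2 < 1 := by nlinarith [norm_nonneg q]
  have hp1 : (0:ℝ) < 1 + ‖p‖ ^ 2 := by positivity
  have hq1 : (0:ℝ) < 1 + ‖q‖ ^ 2 := by positivity
  have hnp : ‖toKlein p‖ ^ 2 = 4 * ‖p‖ ^ 2 / (1 + ‖p‖ ^ 2) ^ 2 := by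
    rw [toKlein, norm_smul, Real.norm_eq_abs, abs_of_pos (by positivity)]
    field_simp; ring
  have hnq : ‖toKlein q‖ ^ 2 = 4 * ‖q‖ ^ 2 / (1 + ‖q‖ ^ 2) ^ 2 := by
    rw [toKlein, norm_smul, Real.norm_eq_abs, abs_of_pos (by positivity)]
    field_simp; ring
  have hin : ⟪toKlein p, toKlein q⟫ = (2 / (1 + ‖p‖ ^ 2)) * (2 / (1 + ‖q‖ ^ 2)) * ⟪p, q⟫ := by
    rw [toKlein, toKlein, real_inner_smul_left, real_inner_smul_right]; ring
  have hsq : Real.sqrt ((1 - ‖toKlein p‖ ^ 2) * (1 - ‖toKlein q‖ ^ 2)) =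
      (1 - ‖p‖ ^ 2) / (1 + ‖p‖ ^ 2) * ((1 - ‖q‖ ^ 2) / (1 + ‖q‖ ^ 2)) := by
    have h1 : 1 - 4 * ‖p‖ ^ 2 / (1 + ‖p‖ ^ 2) ^ 2 = ((1 - ‖p‖ ^ 2) / (1 + ‖p‖ ^ 2)) ^ 2 := by
      field_simp; ring
    have h2 : 1 - 4 * ‖q‖ ^ 2 / (1 + ‖q‖ ^ 2) ^ 2 = ((1 - ‖q‖ ^ 2) / (1 + ‖q‖ ^ 2)) ^ 2 := by
      field_simp; ring
    rw [hnp, hnq, h1, h2, ← mul_pow, Real.sqrt_sq]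
    have : (0:ℝ) ≤ (1 - ‖p‖ ^ 2) / (1 + ‖p‖ ^ 2) := div_nonneg (by linarith) (by linarith)
    have : (0:ℝ) ≤ (1 - ‖q‖ ^ 2) / (1 + ‖q‖ ^ 2) := div_nonneg (by linarith) (by linarith)
    positivity
  unfold hK
  rw [hin, hsq]
  congr 1
  have hns : ‖p - q‖ ^ 2 = ‖p‖ ^ 2 - 2 * ⟪p, q⟫ + ‖q‖ ^ 2 := norm_sub_sq_real p q
  rw [hns]
  have h1 : (1:ℝ) - ‖p‖ ^ 2 ≠ 0 := by linarith
  have h2 : (1:ℝ) - ‖q‖ ^ 2 ≠ 0 := by linarith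
  field_simp
  ring
end

section
/- The half-space {x : ⟨x, a⟩ + b ≤ 0} with a = sqrt(1-‖p‖²)·q - sqrt(1-‖q‖²)·p and b = sqrt(1-‖q‖²) - sqrt(1-‖p‖²) contains p (strictly, when p ≠ q), i.e., ⟨p,a⟩ + b < 0 for p ≠ q in the open unit ball. -/
open scoped RealInnerProductSpace

theorem site_on_own_side {d : ℕ} (p q : EuclideanSpace ℝ (Fin d))
    (hp : ‖p‖ < 1) (hq : ‖q‖ < 1) (hpq : p ≠ q) :
    ⟪p, Real.sqrt (1 - ‖p‖ ^ 2) • q - Real.sqrt (1 - ‖q‖ ^ 2) • p⟫ +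
      (Real.sqrt (1 - ‖q‖ ^ 2) - Real.sqrt (1 - ‖p‖ ^ 2)) < 0 := by
  set a := ‖p‖ ^ 2 with ha
  set b := ‖q‖ ^ 2 with hb
  have hpa : a < 1 := by
    have := norm_nonneg p; nlinarith
  have hqb : b < 1 := by
    have := norm_nonneg q; nlinarith
  have ha0 : (0:ℝ) ≤ 1 - a := by linarith
  have hb0 : (0:ℝ) ≤ 1 - b := by linarith
  have hsp : Real.sqrt (1 - a) ^ 2 = 1 - a := Real.sq_sqrt ha0
  have hsq : Real.sqrt (1 - b) ^ 2 = 1 - b := Real.sq_sqrt hb0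
  have hsp0 : 0 < Real.sqrt (1 - a) := Real.sqrt_pos.2 (by linarith)
  have hsq0 : 0 ≤ Real.sqrt (1 - b) := Real.sqrt_nonneg _
  -- inner product bound
  have hsub : 0 < ‖p - q‖ ^ 2 := by
    have h0 : 0 < ‖p - q‖ := norm_pos_iff.2 (sub_ne_zero.2 hpq)
    positivity
  have hnorm : ‖p - q‖ ^ 2 = a + b - 2 * ⟪p, q⟫ := by
    rw [ha, hb, @norm_sub_sq_real]; ring
  have hip : ⟪p, q⟫ < (a + b) / 2 := by nlinarith
  -- AM-GM bound on sqrt product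
  have hprod : Real.sqrt (1 - a) * Real.sqrt (1 - b) ≤ 1 - (a + b) / 2 := by
    rw [← Real.sqrt_mul ha0]
    have h1 : (1 - a) * (1 - b) ≤ (1 - (a + b) / 2) ^ 2 := by nlinarith [sq_nonneg (a - b)]
    calc Real.sqrt ((1 - a) * (1 - b)) ≤ Real.sqrt ((1 - (a + b) / 2) ^ 2) :=
          Real.sqrt_le_sqrt h1
      _ = 1 - (a + b) / 2 := Real.sqrt_sq (by linarith)
  -- expand inner product
  rw [inner_sub_right, real_inner_smul_right, real_inner_smul_right,
    real_inner_self_eq_norm_sq, ← ha]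
  nlinarith [mul_lt_mul_of_pos_left hip hsp0, mul_le_mul_of_nonneg_left hprod hsp0.le]
end
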